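/- From every state s of a correct packet switching network there exists a state s' reachable from s using only process and receive steps such that no process or receive step is enabled in s'; i.e., the number of consecutive process/receive steps from any state is bounded. -/

import Mathlib

structure PSN where
  Node : Type
  Chan : Type
  fintypeNode : Fintype Node
  decEqNode : DecidableEq Node
  fintypeChan : Fintype Chan
  decEqChan : DecidableEq Chan
  M : Finset Node
  hM : 2 ≤ M.card
  source : Chan → Node
  target : Chan → Node
  rout : Node → Node → Chan
  rout_source : ∀ n m, m ∈ M → m ≠ n → source (rout n m) = n

attribute [instance] PSN.fintypeNode PSN.decEqNode PSN.fintypeChan PSN.decEqChan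

namespace PSN

variable (P : PSN)

/-- A state records the content of every channel: `none` is an empty channel,
`some m` is a message destined for terminal `m`. -/
abbrev State := P.Chan → Option P.Node

/-- The next hop of a message destined for `m` at node `n`. -/
def nexthop (m n : P.Node) : P.Node := P.target (P.rout n m)

/-- The next channel for a message destined for `m` currently in channel `c`. -/
def nextC (m : P.Node) (c : P.Chan) : P.Chan := P.rout (P.target c) m

/-- The network is correct: every message can reach its destination in a
bounded number of hops. -/
def Correct : Prop := ∀ m ∈ P.M, ∀ n : P.Node, ∃ k : ℕ, (P.nexthop m)^[k] n = m

/-- Initial states: all channels empty. -/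
def init (s : P.State) : Prop := ∀ c, s c = none

/-- Send step: terminal `m` inserts a message for terminal `m' ≠ m` into the
(currently empty) channel `rout m m'`. -/
def sendStep (s s' : P.State) : Prop :=
  ∃ m m', m ∈ P.M ∧ m' ∈ P.M ∧ m ≠ m' ∧ s (P.rout m m') = none ∧
    s' = Function.update s (P.rout m m') (some m')

/-- Process step: a node forwards a message `m` from an incoming channel `c`
(with `target c ≠ m`) to the routed outgoing channel, provided it is empty. -/
def procStep (s s' : P.State) : Prop :=
  ∃ m c, m ∈ P.M ∧ s c = some m ∧ P.target c ≠ m ∧ s (P.nextC m c) = none ∧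
    s' = Function.update (Function.update s c none) (P.nextC m c) (some m)

/-- Receive step: terminal `m` removes a message destined for it from an
incoming channel. -/
def recvStep (s s' : P.State) : Prop :=
  ∃ m c, m ∈ P.M ∧ s c = some m ∧ P.target c = m ∧ s' = Function.update s c none

/-- Send, process or receive transitions. -/
def stepSPR (s s' : P.State) : Prop := P.sendStep s s' ∨ P.procStep s s' ∨ P.recvStep s s'

/-- Process or receive transitions. -/
def stepPR (s s' : P.State) : Prop := P.procStep s s' ∨ P.recvStep s s'

/-- The (total) transition relation of the Kripke structure: send, process and
receive steps, plus self-loops on otherwise-stuck states. -/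
def step (s s' : P.State) : Prop := P.stepSPR s s' ∨ (s = s' ∧ ∀ t, ¬ P.stepSPR s t)

/-- Reachable states: reachable from an initial state. -/
def reachable (s : P.State) : Prop := ∃ s₀, P.init s₀ ∧ Relation.ReflTransGen P.step s₀ s

/-- Global deadlock: no transition to a distinct state. -/
def globalDeadlock (s : P.State) : Prop := ∀ s', P.step s s' → s' = s

/-- Local deadlock at channel `c`: `c` is nonempty and keeps the same content
along every execution. -/
def localDeadlockAt (c : P.Chan) (s : P.State) : Prop :=
  ∀ s', Relation.ReflTransGen P.step s s' → s c ≠ none ∧ s' c = s c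

/-- Local deadlock: some channel is locally deadlocked. -/
def localDeadlock (s : P.State) : Prop := ∃ c, P.localDeadlockAt c s

/-- Weak deadlock: a non-initial state with no process or receive step. -/
def weakDeadlock (s : P.State) : Prop := ¬ P.init s ∧ ∀ s', ¬ P.stepPR s s'

/-- `Nval c v` is the number of hops needed for the content `v` of channel `c`
to reach its destination: `0` for the empty channel, and for a message `m`
one more than the least `l` with `target (nextC m ^[l] c) = m`. -/
noncomputable def Nval (c : P.Chan) : Option P.Node → ℕ
  | none => 0
  | some m => sInf {l | P.target ((P.nextC m)^[l] c) = m} + 1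

/-- The weight of a state: total number of hops needed for all messages
currently in the network to reach their destinations. -/
noncomputable def wt (s : P.State) : ℕ := ∑ c : P.Chan, P.Nval c (s c)

/-! Every process or receive step strictly decreases `wt`: a receive deletes a message, and a
process step moves a message one hop closer to its destination, where correctness of the routing
makes the hop counts finite. As `ℕ` is well-founded, every process/receive path is finite. -/

lemma target_iterate_nextC (m : P.Node) (l : ℕ) (c : P.Chan) :
    P.target ((P.nextC m)^[l] c) = (P.nexthop m)^[l] (P.target c) := by
  induction l generalizing c with
  | zero => rfl
  | succ l ih => rw [Function.iterate_succ_apply, ih, Function.iterate_succ_apply]; rfl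

lemma Nval_nextC_lt (hc : P.Correct) {m : P.Node} (hm : m ∈ P.M) {c : P.Chan}
    (htc : P.target c ≠ m) : P.Nval (P.nextC m c) (some m) < P.Nval c (some m) := by
  have hne : {l | P.target ((P.nextC m)^[l] c) = m}.Nonempty := by
    obtain ⟨k, hk⟩ := hc m hm (P.target c)
    exact ⟨k, show P.target _ = m by rw [target_iterate_nextC, hk]⟩
  have hn := Nat.sInf_mem hne
  obtain ⟨k, hk⟩ : ∃ k, sInf {l | P.target ((P.nextC m)^[l] c) = m} = k + 1 :=
    Nat.exists_eq_add_one.2 (Nat.pos_of_ne_zero fun h0 => htc (by rwa [h0] at hn))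
  rw [Set.mem_ofPred_eq, hk, Function.iterate_succ_apply] at hn
  simp only [Nval, hk, add_lt_add_iff_right, Nat.lt_succ_iff]
  exact Nat.sInf_le hn

lemma Nval_none (c : P.Chan) : P.Nval c none = 0 := rfl

lemma wt_update_add (t : P.State) (c : P.Chan) (v : Option P.Node) :
    P.wt (Function.update t c v) + P.Nval c (t c) = P.wt t + P.Nval c v := by
  simp only [wt, Function.apply_update (fun x => P.Nval x),
    Finset.sum_update_of_mem (Finset.mem_univ c),
    Finset.sum_eq_add_sum_sdiff_singleton_of_mem (Finset.mem_univ c) (fun x => P.Nval x (t x))]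
  ring

lemma wt_lt_of_stepPR (hc : P.Correct) {s s' : P.State} (h : P.stepPR s s') :
    P.wt s' < P.wt s := by
  rcases h with ⟨m, c, hm, hsc, htc, hnext, rfl⟩ | ⟨m, c, -, hsc, -, rfl⟩
  · have hcleared : Function.update s c none (P.nextC m c) = none := by
      rw [Function.update_apply]; split_ifs <;> first | rfl | assumption
    have h₁ := P.wt_update_add (Function.update s c none) (P.nextC m c) (some m)
    have h₂ := P.wt_update_add s c none
    have hlt := P.Nval_nextC_lt hc hm htc
    rw [hcleared, Nval_none] at h₁
    rw [hsc, Nval_none] at h₂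
    omega
  · have h₁ := P.wt_update_add s c none
    have hpos : 0 < P.Nval c (some m) := Nat.succ_pos _
    rw [hsc, Nval_none] at h₁
    omega

end PSN

theorem Relation.exists_reflTransGen_forall_not_of_wellFounded {α : Type*} {r : α → α → Prop}
    (hr : WellFounded (flip r)) (a : α) : ∃ b, ReflTransGen r a b ∧ ∀ c, ¬ r b c := by
  obtain ⟨b, hab, hmin⟩ := hr.has_min {b | ReflTransGen r a b} ⟨a, .refl⟩
  exact ⟨b, hab, fun c hbc => hmin c (hab.tail hbc) hbc⟩

/-- From every state, a state with no enabled process or receive step is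
reachable using only process and receive steps. -/
theorem stmt8 (P : PSN) (hc : P.Correct) (s : P.State) :
    ∃ s', Relation.ReflTransGen P.stepPR s s' ∧ ∀ t, ¬ P.stepPR s' t :=
  Relation.exists_reflTransGen_forall_not_of_wellFounded
    (Subrelation.wf (P.wt_lt_of_stepPR hc) (InvImage.wf P.wt wellFounded_lt)) s
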